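/- arXiv:2510.16818 — 2 statements merged into one kernel-verified Lean document; each statement's English description precedes it below -/
import Mathlib

section
/- Assume Assumption (A) holds and that V(x) is finite for every x ∈ ℝ^d. Let (x̄,ȳ) be a local solution of the value function formulation (VP), i.e. f(x̄,ȳ) ≤ V(x̄), g(x̄,ȳ) ≤ 0, and F(x,y) ≥ F(x̄,ȳ) for all (x,y) in some neighborhood of (x̄,ȳ) with f(x,y) ≤ V(x) and g(x,y) ≤ 0. Let (x̄,ȳ,ū,s̄) ∈ F_S be a local solution of SVF, i.e. F(x,y) ≥ F(x̄,ȳ) for all (x,y,u,s) ∈ F_S in some neighborhood of (x̄,ȳ,ū,s̄). If VP is partially calm at (x̄,ȳ), i.e. there exists λ̄ > 0 such that for every λ > λ̄ the point (x̄,ȳ) is a local minimizer of F(x,y) + λ(f(x,y) − V(x)) over {(x,y) : g(x,y) ≤ 0}, then SVF is partially calm at (x̄,ȳ,ū,s̄): there exist λ > 0 and a neighborhood W of (x̄,ȳ,ū,s̄) such that F(x,y) + λ(f(x,y) − f(x,u)) ≥ F(x̄,ȳ) + λ(f(x̄,ȳ) − f(x̄,ū)) for every (x,y,u,s) ∈ W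 ∩ F̃. -/
open scoped InnerProductSpace
open Filter Topology

noncomputable section

/-- Euclidean space ℝ^n. -/
abbrev E (n : ℕ) : Type := EuclideanSpace ℝ (Fin n)

variable {d l m : ℕ}

/-- Gradient with respect to the first argument. -/
noncomputable def grad1 (f : E d × E l → ℝ) (x : E d) (y : E l) : E d :=
  gradient (fun x' => f (x', y)) x

/-- Gradient with respect to the second argument. -/
noncomputable def grad2 (f : E d × E l → ℝ) (x : E d) (y : E l) : E l :=
  gradient (fun y' => f (x, y')) y

/-- The lower level feasible set `Y(x) = {y : g(x,y) ≤ 0}`. -/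
def Yset (g : Fin m → E d × E l → ℝ) (x : E d) : Set (E l) :=
  {y | ∀ i, g i (x, y) ≤ 0}

/-- The lower level solution set `S(x)`. -/
def Sset (f : E d × E l → ℝ) (g : Fin m → E d × E l → ℝ) (x : E d) : Set (E l) :=
  {y | y ∈ Yset g x ∧ ∀ y' ∈ Yset g x, f (x, y) ≤ f (x, y')}

/-- The lower level Lagrangian `L(x,u,s) = f(x,u) + Σᵢ sᵢ gᵢ(x,u)`. -/
noncomputable def Lag (f : E d × E l → ℝ) (g : Fin m → E d × E l → ℝ)
    (x : E d) (u : E l) (s : Fin m → ℝ) : ℝ :=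
  f (x, u) + ∑ i, s i * g i (x, u)

/-- The lower level multiplier set `M(x,u)`. -/
def Mset (f : E d × E l → ℝ) (g : Fin m → E d × E l → ℝ) (x : E d) (u : E l) :
    Set (Fin m → ℝ) :=
  {s | grad2 f x u + ∑ i, s i • grad2 (g i) x u = 0 ∧ (∀ i, 0 ≤ s i) ∧
       ∑ i, s i * g i (x, u) = 0}

/-- Assumption (A): pseudoconvexity of the lower level Lagrangian. -/
def AssumptionA (f : E d × E l → ℝ) (g : Fin m → E d × E l → ℝ) : Prop :=
  ∀ (x : E d), ∀ u1 ∈ Yset g x, ∀ u2 ∈ Yset g x, ∀ s ∈ Mset f g x u2,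
    0 ≤ ⟪u1 - u2, gradient (fun u' => Lag f g x u' s) u2⟫_ℝ →
    Lag f g x u2 s ≤ Lag f g x u1 s

/-- The lower level KKT conditions at `(x,u)` with multiplier `s`. -/
def LLKKT (f : E d × E l → ℝ) (g : Fin m → E d × E l → ℝ)
    (x : E d) (u : E l) (s : Fin m → ℝ) : Prop :=
  grad2 f x u + ∑ i, s i • grad2 (g i) x u = 0 ∧
  ∀ i, 0 ≤ s i ∧ g i (x, u) ≤ 0 ∧ s i * g i (x, u) = 0

/-- Membership in the feasible set `F_S` of the SVF formulation. -/
def FSmem (f : E d × E l → ℝ) (g : Fin m → E d × E l → ℝ)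
    (x : E d) (y u : E l) (s : Fin m → ℝ) : Prop :=
  f (x, y) - f (x, u) ≤ 0 ∧ LLKKT f g x u s ∧ ∀ i, g i (x, y) ≤ 0

/-- The value function `V(x) = inf {f(x,y) : y ∈ Y(x)}`. -/
noncomputable def Vval (f : E d × E l → ℝ) (g : Fin m → E d × E l → ℝ) (x : E d) : ℝ :=
  sInf ((fun y => f (x, y)) '' Yset g x)

/-- Smoothness data: `f`, `g` are `C¹` jointly, and `C²` in the second variable. -/
def SmoothData (f : E d × E l → ℝ) (g : Fin m → E d × E l → ℝ) : Prop :=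
  ContDiff ℝ 1 f ∧ (∀ i, ContDiff ℝ 1 (g i)) ∧
  (∀ x : E d, ContDiff ℝ 2 (fun y : E l => f (x, y))) ∧
  ∀ i, ∀ x : E d, ContDiff ℝ 2 (fun y : E l => g i (x, y))

/-- Membership in `F̃`: all SVF constraints except `f(x,y) − f(x,u) ≤ 0`. -/
def Ftmem (f : E d × E l → ℝ) (g : Fin m → E d × E l → ℝ)
    (x : E d) (y u : E l) (s : Fin m → ℝ) : Prop :=
  LLKKT f g x u s ∧ ∀ i, g i (x, y) ≤ 0


lemma lag_hasGradientAt {d l m : ℕ} (f : E d × E l → ℝ) (g : Fin m → E d × E l → ℝ)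
    (hsmooth : SmoothData f g) (x : E d) (u : E l) (s : Fin m → ℝ) :
    HasGradientAt (fun u' => Lag f g x u' s)
      (grad2 f x u + ∑ i, s i • grad2 (g i) x u) u := by
  have hf : HasGradientAt (fun u' => f (x, u')) (grad2 f x u) u :=
    ((hsmooth.2.2.1 x).differentiable (by norm_num) u).hasGradientAt
  have hg : ∀ i, HasGradientAt (fun u' => g i (x, u')) (grad2 (g i) x u) u := fun i =>
    ((hsmooth.2.2.2 i x).differentiable (by norm_num) u).hasGradientAt
  rw [hasGradientAt_iff_hasFDerivAt]
  have h := (hf.hasFDerivAt).add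
    (HasFDerivAt.fun_sum (fun i (_ : i ∈ Finset.univ) => ((hg i).hasFDerivAt.const_mul (s i))))
  have heq : (InnerProductSpace.toDual ℝ (E l)) (grad2 f x u + ∑ i, s i • grad2 (g i) x u)
      = (InnerProductSpace.toDual ℝ (E l)) (grad2 f x u)
        + ∑ i, s i • (InnerProductSpace.toDual ℝ (E l)) (grad2 (g i) x u) := by
    simp [map_add, map_sum, map_smul]
  rw [heq]
  exact h

lemma kkt_value {d l m : ℕ} (f : E d × E l → ℝ) (g : Fin m → E d × E l → ℝ)
    (hsmooth : SmoothData f g) (hA : AssumptionA f g)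
    (hVfin : ∀ x : E d, ((fun y => f (x, y)) '' Yset g x).Nonempty ∧
      BddBelow ((fun y => f (x, y)) '' Yset g x))
    (x : E d) (u : E l) (s : Fin m → ℝ) (hkkt : LLKKT f g x u s) :
    Vval f g x = f (x, u) := by
  have huY : u ∈ Yset g x := fun i => (hkkt.2 i).2.1
  have hsum : ∑ i, s i * g i (x, u) = 0 :=
    Finset.sum_eq_zero fun i _ => (hkkt.2 i).2.2
  have hsM : s ∈ Mset f g x u := ⟨hkkt.1, fun i => (hkkt.2 i).1, hsum⟩
  have hmin : ∀ y ∈ Yset g x, f (x, u) ≤ f (x, y) := by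
    intro y hy
    have hgrad := (lag_hasGradientAt f g hsmooth x u s).gradient
    have key := hA x y hy u huY s hsM ?_
    · have h1 : Lag f g x u s = f (x, u) := by rw [Lag, hsum, add_zero]
      have h2 : Lag f g x y s ≤ f (x, y) := by
        have hle : ∑ i, s i * g i (x, y) ≤ 0 :=
          Finset.sum_nonpos fun i _ =>
            mul_nonpos_of_nonneg_of_nonpos (hkkt.2 i).1 (hy i)
        rw [Lag]; linarith
      linarith
    · rw [hgrad, hkkt.1, inner_zero_right]
  refine le_antisymm (csInf_le (hVfin x).2 ⟨u, huY, rfl⟩) ?_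
  refine le_csInf (hVfin x).1 ?_
  rintro r ⟨y, hy, rfl⟩
  exact hmin y hy

/-- under Assumption (A) (with `V` finite everywhere), if `(x̄,ȳ)` is a
local solution of VP, `(x̄,ȳ,ū,s̄)` is a local solution of SVF, and VP is partially calm
at `(x̄,ȳ)`, then SVF is partially calm at `(x̄,ȳ,ū,s̄)`. -/
theorem partial_calmness_vp_implies_partial_calmness_svf
    {d l m : ℕ} (hd : 0 < d) (hl : 0 < l) (hm : 0 < m)
    (F f : E d × E l → ℝ) (g : Fin m → E d × E l → ℝ)
    (hF : ContDiff ℝ 1 F) (hsmooth : SmoothData f g)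
    (hA : AssumptionA f g)
    (hVfin : ∀ x : E d, ((fun y => f (x, y)) '' Yset g x).Nonempty ∧
      BddBelow ((fun y => f (x, y)) '' Yset g x))
    (xb : E d) (yb ub : E l) (sb : Fin m → ℝ)
    -- (x̄,ȳ) is a local solution of VP
    (hVPfeas1 : f (xb, yb) ≤ Vval f g xb)
    (hVPfeas2 : ∀ i, g i (xb, yb) ≤ 0)
    (hVPloc : ∃ U : Set (E d × E l), IsOpen U ∧ (xb, yb) ∈ U ∧
      ∀ (x : E d) (y : E l), (x, y) ∈ U → f (x, y) ≤ Vval f g x →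
        (∀ i, g i (x, y) ≤ 0) → F (xb, yb) ≤ F (x, y))
    -- (x̄,ȳ,ū,s̄) is a local solution of SVF
    (hFS : FSmem f g xb yb ub sb)
    (hSVFloc : ∃ W : Set (E d × E l × E l × (Fin m → ℝ)), IsOpen W ∧
      (xb, yb, ub, sb) ∈ W ∧
      ∀ (x : E d) (y u : E l) (s : Fin m → ℝ),
        (x, y, u, s) ∈ W → FSmem f g x y u s → F (xb, yb) ≤ F (x, y))
    -- VP is partially calm at (x̄,ȳ)
    (hcalmVP : ∃ lambar : ℝ, 0 < lambar ∧ ∀ lam : ℝ, lambar < lam →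
      ∃ U : Set (E d × E l), IsOpen U ∧ (xb, yb) ∈ U ∧
        ∀ (x : E d) (y : E l), (x, y) ∈ U → (∀ i, g i (x, y) ≤ 0) →
          F (xb, yb) + lam * (f (xb, yb) - Vval f g xb) ≤
            F (x, y) + lam * (f (x, y) - Vval f g x)) :
    -- SVF is partially calm at (x̄,ȳ,ū,s̄)
    ∃ lam : ℝ, 0 < lam ∧
      ∃ W : Set (E d × E l × E l × (Fin m → ℝ)), IsOpen W ∧ (xb, yb, ub, sb) ∈ W ∧
        ∀ (x : E d) (y u : E l) (s : Fin m → ℝ),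
          (x, y, u, s) ∈ W → Ftmem f g x y u s →
          F (xb, yb) + lam * (f (xb, yb) - f (xb, ub)) ≤
            F (x, y) + lam * (f (x, y) - f (x, u)) := by
  obtain ⟨lambar, hlb, hcalm⟩ := hcalmVP
  obtain ⟨U, hUopen, hUmem, hU⟩ := hcalm (lambar + 1) (lt_add_one _)
  refine ⟨lambar + 1, by linarith, {p : E d × E l × E l × (Fin m → ℝ) | (p.1, p.2.1) ∈ U},
    hUopen.preimage (continuous_fst.prodMk (continuous_fst.comp continuous_snd)),
    hUmem, ?_⟩
  intro x y u s hW hFt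
  have hVx : Vval f g x = f (x, u) := kkt_value f g hsmooth hA hVfin x u s hFt.1
  have hVxb : Vval f g xb = f (xb, ub) := kkt_value f g hsmooth hA hVfin xb ub sb hFS.2.1
  have := hU x y hW hFt.2
  rw [hVx, hVxb] at this
  exact this
end
end

section
/- Assume Assumption (A) holds, and assume (Assumption (B)) that for every x ∈ ℝ^d, r > 0 and ρ > 0 there exists (u,s) ∈ ℝ^l × ℝ^m with ∇₂f(x,u) + Σ_{i=1}^m (κ_i/ρ) ∇₂g_i(x,u) = 0 and z_i + g_i(x,u) = 0 for every i. Let r_k > 0 with r_k → 0 and ρ_k > 0 with ρ_k → ρ̄ for some ρ̄ > 0, and for each k let (x_k,y_k,u_k,s_k) be a global solution of SVF_{r_k,ρ_k}, i.e. it is feasible for SVF_{r_k,ρ_k} and F(x_k,y_k) ≤ F(x,y) for every (x,y,u,s) feasible for SVF_{r_k,ρ_k}. If (x_k,y_k,u_k,s_k) → (x̄,ȳ,ū,s̄), then (x̄,ȳ,ū,s̄) is a global solution of SVF: (x̄,ȳ,ū,s̄) ∈ F_S and F(x̄,ȳ) ≤ F(x,y) for every (x,y,u,s) ∈ F_S.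 -/
open scoped InnerProductSpace
open Filter Topology

noncomputable section

variable {d l m : ℕ}

/-- `z(a,s,r,ρ)` from the smoothing barrier augmented Lagrangian method. -/
noncomputable def zfun (a s r ρ : ℝ) : ℝ :=
  (1 / 2) * (Real.sqrt ((ρ * s + a) ^ 2 + 4 * r * ρ) - (ρ * s + a))

/-- `κ(a,s,r,ρ)` from the smoothing barrier augmented Lagrangian method. -/
noncomputable def kfun (a s r ρ : ℝ) : ℝ :=
  (1 / 2) * (Real.sqrt ((ρ * s + a) ^ 2 + 4 * r * ρ) + (ρ * s + a))

/-- Feasibility for the smoothed problem `SVF_{r,ρ}`. -/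
def SVFrFeas (f : E d × E l → ℝ) (g : Fin m → E d × E l → ℝ) (r ρ : ℝ)
    (x : E d) (y u : E l) (s : Fin m → ℝ) : Prop :=
  f (x, y) - f (x, u) ≤ 0 ∧
  grad2 f x u + ∑ i, (kfun (g i (x, u)) (s i) r ρ / ρ) • grad2 (g i) x u = 0 ∧
  (∀ i, zfun (g i (x, u)) (s i) r ρ + g i (x, u) = 0) ∧
  ∀ i, g i (x, y) ≤ 0


section Aux

variable {d l m : ℕ}

lemma sqrt_ge_abs (b c : ℝ) (hc : 0 ≤ c) : |b| ≤ Real.sqrt (b ^ 2 + c) := by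
  rw [← Real.sqrt_sq_eq_abs]
  exact Real.sqrt_le_sqrt (by linarith)

lemma zfun_nonneg (a s r ρ : ℝ) (hr : 0 ≤ r) (hρ : 0 ≤ ρ) : 0 ≤ zfun a s r ρ := by
  unfold zfun
  have h1 := sqrt_ge_abs (ρ * s + a) (4 * r * ρ) (by nlinarith)
  have h2 := le_abs_self (ρ * s + a)
  nlinarith

lemma kfun_nonneg (a s r ρ : ℝ) (hr : 0 ≤ r) (hρ : 0 ≤ ρ) : 0 ≤ kfun a s r ρ := by
  unfold kfun
  have h1 := sqrt_ge_abs (ρ * s + a) (4 * r * ρ) (by nlinarith)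
  have h2 := neg_abs_le (ρ * s + a)
  nlinarith

lemma zfun_mul_kfun (a s r ρ : ℝ) (hr : 0 ≤ r) (hρ : 0 ≤ ρ) :
    zfun a s r ρ * kfun a s r ρ = r * ρ := by
  unfold zfun kfun
  have h : Real.sqrt ((ρ * s + a) ^ 2 + 4 * r * ρ) ^ 2 = (ρ * s + a) ^ 2 + 4 * r * ρ :=
    Real.sq_sqrt (by nlinarith)
  nlinarith [h]

lemma kfun_sub_zfun (a s r ρ : ℝ) : kfun a s r ρ - zfun a s r ρ = ρ * s + a := by
  unfold zfun kfun; ring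

lemma tendsto_zfun {α : Type*} {L : Filter α} {a s r ρ : α → ℝ} {a0 s0 r0 ρ0 : ℝ}
    (ha : Tendsto a L (nhds a0)) (hs : Tendsto s L (nhds s0))
    (hr : Tendsto r L (nhds r0)) (hρ : Tendsto ρ L (nhds ρ0)) :
    Tendsto (fun k => zfun (a k) (s k) (r k) (ρ k)) L (nhds (zfun a0 s0 r0 ρ0)) := by
  unfold zfun
  exact (((((hρ.mul hs).add ha).pow 2).add (((tendsto_const_nhds.mul hr).mul hρ))).sqrt.sub
    ((hρ.mul hs).add ha)).const_mul _

lemma tendsto_kfun {α : Type*} {L : Filter α} {a s r ρ : α → ℝ} {a0 s0 r0 ρ0 : ℝ}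
    (ha : Tendsto a L (nhds a0)) (hs : Tendsto s L (nhds s0))
    (hr : Tendsto r L (nhds r0)) (hρ : Tendsto ρ L (nhds ρ0)) :
    Tendsto (fun k => kfun (a k) (s k) (r k) (ρ k)) L (nhds (kfun a0 s0 r0 ρ0)) := by
  unfold kfun
  exact (((((hρ.mul hs).add ha).pow 2).add (((tendsto_const_nhds.mul hr).mul hρ))).sqrt.add
    ((hρ.mul hs).add ha)).const_mul _

lemma grad2_eq (f : E d × E l → ℝ) (hf : Differentiable ℝ f) (x : E d) (u : E l) :
    grad2 f x u = (InnerProductSpace.toDual ℝ (E l)).symm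
      ((fderiv ℝ f (x, u)).comp (ContinuousLinearMap.inr ℝ (E d) (E l))) := by
  unfold grad2 gradient
  congr 1
  exact ((hf (x, u)).hasFDerivAt.comp u (hasFDerivAt_prodMk_right x u)).fderiv

lemma continuous_grad2 (f : E d × E l → ℝ) (hf : ContDiff ℝ 1 f) :
    Continuous fun p : E d × E l => grad2 f p.1 p.2 := by
  have hdiff : Differentiable ℝ f := hf.differentiable (by norm_num)
  have heq : (fun p : E d × E l => grad2 f p.1 p.2)
      = fun p : E d × E l => (InnerProductSpace.toDual ℝ (E l)).symm
        ((fderiv ℝ f p).comp (ContinuousLinearMap.inr ℝ (E d) (E l))) := by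
    funext p
    rw [grad2_eq f hdiff p.1 p.2]
  rw [heq]
  exact (InnerProductSpace.toDual ℝ (E l)).symm.continuous.comp
    ((((ContinuousLinearMap.compL ℝ (E l) (E d × E l) ℝ).flip
      (ContinuousLinearMap.inr ℝ (E d) (E l))).continuous).comp
      (hf.continuous_fderiv (by norm_num)))

lemma gradient_lag (f : E d × E l → ℝ) (g : Fin m → E d × E l → ℝ)
    (x : E d) (u : E l) (s : Fin m → ℝ)
    (hf : ContDiff ℝ 2 fun y : E l => f (x, y))
    (hg : ∀ i, ContDiff ℝ 2 fun y : E l => g i (x, y)) :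
    gradient (fun u' => Lag f g x u' s) u = grad2 f x u + ∑ i, s i • grad2 (g i) x u := by
  have hfd : DifferentiableAt ℝ (fun y : E l => f (x, y)) u :=
    (hf.differentiable (by norm_num)).differentiableAt
  have hgd : ∀ i, DifferentiableAt ℝ (fun y : E l => g i (x, y)) u := fun i =>
    ((hg i).differentiable (by norm_num)).differentiableAt
  have h1 : fderiv ℝ (fun u' : E l => Lag f g x u' s) u
      = fderiv ℝ (fun y : E l => f (x, y)) u
        + ∑ i, s i • fderiv ℝ (fun y : E l => g i (x, y)) u := by
    have e : (fun u' : E l => Lag f g x u' s)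
        = fun u' : E l => f (x, u') + ∑ i, s i * g i (x, u') := rfl
    rw [e, fderiv_fun_add hfd (DifferentiableAt.fun_sum fun i _ => (hgd i).const_mul (s i)),
      fderiv_fun_sum fun i _ => (hgd i).const_mul (s i)]
    congr 1
    exact Finset.sum_congr rfl fun i _ => fderiv_const_mul (hgd i) (s i)
  unfold grad2 gradient
  rw [h1]
  simp [map_add, map_sum, map_smul]

end Aux

set_option maxHeartbeats 1000000 in
/-- under Assumptions (A) and (B), limits of global solutions of the
smoothed problems `SVF_{r_k,ρ_k}` (with `r_k → 0`, `ρ_k → ρ̄ > 0`) are global solutions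
of SVF. -/
theorem smoothed_global_solutions_converge_to_svf_solution
    {d l m : ℕ} (hd : 0 < d) (hl : 0 < l) (hm : 0 < m)
    (F f : E d × E l → ℝ) (g : Fin m → E d × E l → ℝ)
    (hF : ContDiff ℝ 1 F) (hsmooth : SmoothData f g)
    (hA : AssumptionA f g)
    -- Assumption (B)
    (hB : ∀ (x : E d) (r ρ : ℝ), 0 < r → 0 < ρ →
      ∃ (u : E l) (s : Fin m → ℝ),
        grad2 f x u + ∑ i, (kfun (g i (x, u)) (s i) r ρ / ρ) • grad2 (g i) x u = 0 ∧
        ∀ i, zfun (g i (x, u)) (s i) r ρ + g i (x, u) = 0)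
    (r ρ : ℕ → ℝ) (hr : ∀ k, 0 < r k) (hρ : ∀ k, 0 < ρ k)
    (ρbar : ℝ) (hρbar : 0 < ρbar)
    (hrlim : Tendsto r atTop (nhds 0)) (hρlim : Tendsto ρ atTop (nhds ρbar))
    (x : ℕ → E d) (y u : ℕ → E l) (s : ℕ → Fin m → ℝ)
    -- each (x_k,y_k,u_k,s_k) is a global solution of SVF_{r_k,ρ_k}
    (hfeas : ∀ k, SVFrFeas f g (r k) (ρ k) (x k) (y k) (u k) (s k))
    (hglob : ∀ k, ∀ (x' : E d) (y' u' : E l) (s' : Fin m → ℝ),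
      SVFrFeas f g (r k) (ρ k) x' y' u' s' → F (x k, y k) ≤ F (x', y'))
    (xb : E d) (yb ub : E l) (sb : Fin m → ℝ)
    (hconv : Tendsto (fun k => (x k, y k, u k, s k)) atTop (nhds (xb, yb, ub, sb))) :
    FSmem f g xb yb ub sb ∧
    ∀ (x' : E d) (y' u' : E l) (s' : Fin m → ℝ),
      FSmem f g x' y' u' s' → F (xb, yb) ≤ F (x', y') := by
  obtain ⟨hf1, hg1, hf2, hg2⟩ := hsmooth
  -- component convergences
  have hx : Tendsto x atTop (nhds xb) :=
    ((continuous_fst.tendsto (xb, yb, ub, sb)).comp hconv)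
  have hrest := (continuous_snd.tendsto (xb, yb, ub, sb)).comp hconv
  have hy : Tendsto y atTop (nhds yb) := (continuous_fst.tendsto (yb, ub, sb)).comp hrest
  have hrest2 := (continuous_snd.tendsto (yb, ub, sb)).comp hrest
  have hu : Tendsto u atTop (nhds ub) := (continuous_fst.tendsto (ub, sb)).comp hrest2
  have hs : Tendsto s atTop (nhds sb) := (continuous_snd.tendsto (ub, sb)).comp hrest2
  have hsi : ∀ i, Tendsto (fun k => s k i) atTop (nhds (sb i)) := fun i =>
    ((continuous_apply i).tendsto sb).comp hs
  have hxu : Tendsto (fun k => (x k, u k)) atTop (nhds (xb, ub)) := hx.prodMk_nhds hu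
  have hxy : Tendsto (fun k => (x k, y k)) atTop (nhds (xb, yb)) := hx.prodMk_nhds hy
  have hgu : ∀ i, Tendsto (fun k => g i (x k, u k)) atTop (nhds (g i (xb, ub))) := fun i =>
    ((hg1 i).continuous.tendsto (xb, ub)).comp hxu
  -- limit of the z-equations
  have hzlim : ∀ i, Tendsto (fun k => zfun (g i (x k, u k)) (s k i) (r k) (ρ k)) atTop
      (nhds (zfun (g i (xb, ub)) (sb i) 0 ρbar)) := fun i =>
    tendsto_zfun (hgu i) (hsi i) hrlim hρlim
  have hzeq : ∀ i, zfun (g i (xb, ub)) (sb i) 0 ρbar + g i (xb, ub) = 0 := by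
    intro i
    have h0 : Tendsto (fun k => zfun (g i (x k, u k)) (s k i) (r k) (ρ k) + g i (x k, u k))
        atTop (nhds 0) := by
      have e : (fun k => zfun (g i (x k, u k)) (s k i) (r k) (ρ k) + g i (x k, u k))
          = fun _ => (0 : ℝ) := funext fun k => (hfeas k).2.2.1 i
      rw [e]; exact tendsto_const_nhds
    exact tendsto_nhds_unique ((hzlim i).add (hgu i)) h0
  have hznn : ∀ i, 0 ≤ zfun (g i (xb, ub)) (sb i) 0 ρbar := fun i =>
    zfun_nonneg _ _ _ _ le_rfl hρbar.le
  have hgub : ∀ i, g i (xb, ub) ≤ 0 := fun i => by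
    have := hzeq i; have := hznn i; linarith
  -- κ at the limit equals ρbar * sb i
  have hkeq : ∀ i, kfun (g i (xb, ub)) (sb i) 0 ρbar = ρbar * sb i := by
    intro i
    have h1 := kfun_sub_zfun (g i (xb, ub)) (sb i) 0 ρbar
    have h2 := hzeq i
    linarith
  have hsbnn : ∀ i, 0 ≤ sb i := by
    intro i
    have := kfun_nonneg (g i (xb, ub)) (sb i) 0 ρbar le_rfl hρbar.le
    rw [hkeq i] at this
    exact nonneg_of_mul_nonneg_right this hρbar
  have hcomp : ∀ i, sb i * g i (xb, ub) = 0 := by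
    intro i
    have hzk := zfun_mul_kfun (g i (xb, ub)) (sb i) 0 ρbar le_rfl hρbar.le
    rw [hkeq i] at hzk
    have h2 := hzeq i
    have : zfun (g i (xb, ub)) (sb i) 0 ρbar = -g i (xb, ub) := by linarith
    rw [this] at hzk
    have : ρbar * (sb i * g i (xb, ub)) = 0 := by ring_nf; ring_nf at hzk; linarith
    exact (mul_eq_zero.1 this).resolve_left hρbar.ne'
  -- limit of the gradient equation
  have hlam : ∀ i, Tendsto (fun k => kfun (g i (x k, u k)) (s k i) (r k) (ρ k) / ρ k) atTop
      (nhds (sb i)) := by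
    intro i
    have := (tendsto_kfun (hgu i) (hsi i) hrlim hρlim).div hρlim hρbar.ne'
    rwa [hkeq i, mul_div_cancel_left₀ _ hρbar.ne'] at this
  have hgradlim : Tendsto (fun k => grad2 f (x k) (u k)
      + ∑ i, (kfun (g i (x k, u k)) (s k i) (r k) (ρ k) / ρ k) • grad2 (g i) (x k) (u k))
      atTop (nhds (grad2 f xb ub + ∑ i, sb i • grad2 (g i) xb ub)) := by
    refine Tendsto.add (((continuous_grad2 f hf1).tendsto (xb, ub)).comp hxu) ?_
    exact tendsto_finset_sum _ fun i _ =>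
      (hlam i).smul (((continuous_grad2 (g i) (hg1 i)).tendsto (xb, ub)).comp hxu)
  have hgrad0 : grad2 f xb ub + ∑ i, sb i • grad2 (g i) xb ub = 0 := by
    have h0 : Tendsto (fun k => grad2 f (x k) (u k)
        + ∑ i, (kfun (g i (x k, u k)) (s k i) (r k) (ρ k) / ρ k) • grad2 (g i) (x k) (u k))
        atTop (nhds 0) := by
      have e : (fun k => grad2 f (x k) (u k)
          + ∑ i, (kfun (g i (x k, u k)) (s k i) (r k) (ρ k) / ρ k) • grad2 (g i) (x k) (u k))
          = fun _ => (0 : E l) := funext fun k => (hfeas k).2.1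
      rw [e]; exact tendsto_const_nhds
    exact tendsto_nhds_unique hgradlim h0
  -- remaining feasibility inequalities
  have hfub : f (xb, yb) - f (xb, ub) ≤ 0 := by
    refine le_of_tendsto (Tendsto.sub ((hf1.continuous.tendsto (xb, yb)).comp hxy)
      ((hf1.continuous.tendsto (xb, ub)).comp hxu)) ?_
    exact Filter.Eventually.of_forall fun k => (hfeas k).1
  have hgyb : ∀ i, g i (xb, yb) ≤ 0 := fun i =>
    le_of_tendsto (((hg1 i).continuous.tendsto (xb, yb)).comp hxy)
      (Filter.Eventually.of_forall fun k => (hfeas k).2.2.2 i)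
  have hFSb : FSmem f g xb yb ub sb :=
    ⟨hfub, ⟨hgrad0, fun i => ⟨hsbnn i, hgub i, hcomp i⟩⟩, hgyb⟩
  refine ⟨hFSb, ?_⟩
  -- global optimality
  intro x' y' u' s' hFS
  obtain ⟨hfle, ⟨hgradEq, hKKT⟩, hgy⟩ := hFS
  have hu'Y : u' ∈ Yset g x' := fun i => (hKKT i).2.1
  have hM : s' ∈ Mset f g x' u' :=
    ⟨hgradEq, fun i => (hKKT i).1,
      Finset.sum_eq_zero fun i _ => (hKKT i).2.2⟩
  have hmin : ∀ w ∈ Yset g x', f (x', u') ≤ f (x', w) := by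
    intro w hw
    have hgl : gradient (fun u'' => Lag f g x' u'' s') u' = 0 := by
      rw [gradient_lag f g x' u' s' (hf2 x') fun i => hg2 i x']
      exact hgradEq
    have hAle := hA x' w hw u' hu'Y s' hM (by rw [hgl]; simp)
    have e1 : Lag f g x' u' s' = f (x', u') := by
      unfold Lag
      rw [Finset.sum_eq_zero fun i _ => (hKKT i).2.2]
      ring
    have e2 : ∑ i, s' i * g i (x', w) ≤ 0 :=
      Finset.sum_nonpos fun i _ => mul_nonpos_of_nonneg_of_nonpos (hKKT i).1 (hw i)
    have e3 : Lag f g x' w s' = f (x', w) + ∑ i, s' i * g i (x', w) := rfl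
    rw [e1, e3] at hAle
    linarith
  have key : ∀ k, F (x k, y k) ≤ F (x', y') := by
    intro k
    obtain ⟨u2, s2, hgr2, hz2⟩ := hB x' (r k) (ρ k) (hr k) (hρ k)
    have hu2Y : u2 ∈ Yset g x' := by
      intro i
      have h1 := hz2 i
      have h2 := zfun_nonneg (g i (x', u2)) (s2 i) (r k) (ρ k) (hr k).le (hρ k).le
      linarith
    exact hglob k x' y' u2 s2
      ⟨by have := hmin u2 hu2Y; linarith, hgr2, hz2, hgy⟩
  exact le_of_tendsto ((hF.continuous.tendsto (xb, yb)).comp hxy)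
    (Filter.Eventually.of_forall key)
end
end
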